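/- arXiv:2601.10868 — 3 statements merged into one kernel-verified Lean document; each statement's English description precedes it below -/
import Mathlib

section
/- Let P, Q be real symmetric n×n matrices with Q ≻ 0, P ⪰ 0, and P ⪰ P·Q·P. Then P ⪯ Q⁻¹. -/
open Matrix

/-!
Writing `R = Q⁻¹ - P`, one has the identity `R = (P - P Q P) + R Q R`. When `P` and `Q` are
Hermitian so is `R`, hence `R Q R = Rᴴ Q R ⪰ 0` and `R` is a sum of two positive semidefinite
matrices.
-/

theorem Matrix.inv_sub_eq_sub_mul_mul_add {n R : Type*} [Fintype n] [DecidableEq n] [CommRing R]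
    {Q : Matrix n n R} (hQ : IsUnit Q.det) (P : Matrix n n R) :
    Q⁻¹ - P = (P - P * Q * P) + (Q⁻¹ - P) * Q * (Q⁻¹ - P) := by
  simp only [sub_mul, mul_sub, nonsing_inv_mul Q hQ, mul_nonsing_inv_cancel_right Q _ hQ,
    one_mul]
  abel

open scoped ComplexOrder in
theorem Matrix.PosDef.posSemidef_inv_sub {n 𝕜 : Type*} [Fintype n] [DecidableEq n] [RCLike 𝕜]
    {P Q : Matrix n n 𝕜} (hQ : Q.PosDef) (hP : P.IsHermitian)
    (h : (P - P * Q * P).PosSemidef) : (Q⁻¹ - P).PosSemidef := by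
  have hR : (Q⁻¹ - P).IsHermitian := hQ.isHermitian.inv.sub hP
  have hRQR := hQ.posSemidef.conjTranspose_mul_mul_same (Q⁻¹ - P)
  rw [hR.eq] at hRQR
  rw [inv_sub_eq_sub_mul_mul_add ((isUnit_iff_isUnit_det Q).mp hQ.isUnit) P]
  exact h.add hRQR

/-- If `Q ≻ 0`, `P ⪰ 0`, and `P ⪰ P·Q·P`, then `P ⪯ Q⁻¹`. -/
theorem psd_le_inv_of_PQP {n : ℕ} (P Q : Matrix (Fin n) (Fin n) ℝ)
    (hQ : Q.PosDef) (hP : P.PosSemidef)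
    (h : (P - P * Q * P).PosSemidef) :
    (Q⁻¹ - P).PosSemidef :=
  hQ.posSemidef_inv_sub hP.isHermitian h
end

section
/- Let P, Q, R be real symmetric matrices with Q ≻ 0, R ≻ 0, and let F be an m×n real matrix. If P ⪰ P·Q·P + F'·R·F, then ‖F‖ ≤ ‖R^{-1/2}‖ · √‖Q⁻¹‖, where ‖·‖ denotes the induced operator 2-norm. -/
/-!
Completing the square, `(P - Q⁻¹) Q (P - Q⁻¹) = Q⁻¹ - 2P + PQP ⪰ 0`, turns the hypothesis into
`Fᵀ R F ⪯ Q⁻¹`. With `S = R^{1/2}` this says `(SF)ᵀ(SF) ⪯ Q⁻¹`, so `‖S F x‖² ≤ xᵀ Q⁻¹ x ≤ ‖Q⁻¹‖ ‖x‖²`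
and `‖S F‖ ≤ √‖Q⁻¹‖`; finally `‖F‖ = ‖S⁻¹ (S F)‖ ≤ ‖S⁻¹‖ ‖S F‖`.
-/

open Matrix
open scoped Matrix.Norms.L2Operator

/-- The positive semidefinite square root of a positive semidefinite matrix
(the definition removed from Mathlib, restated with its old meaning). -/
noncomputable def Matrix.PosSemidef.sqrt {n : Type*} [Fintype n] [DecidableEq n]
    {A : Matrix n n ℝ} (hA : A.PosSemidef) : Matrix n n ℝ :=
  (hA.1.eigenvectorUnitary : Matrix n n ℝ) *
    diagonal ((RCLike.ofReal : ℝ → ℝ) ∘ Real.sqrt ∘ hA.1.eigenvalues) *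
    (star hA.1.eigenvectorUnitary : Matrix n n ℝ)

open WithLp
open scoped MatrixOrder ComplexOrder RealInnerProductSpace

namespace Matrix

variable {m n : Type*} [Fintype m]

theorem PosSemidef.sqrt_eq_cfcSqrt [DecidableEq m] {A : Matrix m m ℝ} (hA : A.PosSemidef) :
    hA.sqrt = CFC.sqrt A := by
  rw [CFC.sqrt_eq_cfc, cfc_nnreal_eq_real _ A, hA.1.cfc_eq, IsHermitian.cfc,
    Unitary.conjStarAlgAut_apply, PosSemidef.sqrt]
  congr 3
  ext i
  simp [hA.eigenvalues_nonneg i]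

theorem transpose_mul_self_cfcSqrt_mul [DecidableEq m] {R : Matrix m m ℝ} (hR : R.PosSemidef)
    (F : Matrix m n ℝ) : (CFC.sqrt R * F)ᵀ * (CFC.sqrt R * F) = Fᵀ * R * F := by
  have hS : (CFC.sqrt R)ᵀ = CFC.sqrt R := (CFC.sqrt_nonneg R).posSemidef.1
  rw [transpose_mul, hS, Matrix.mul_assoc, ← Matrix.mul_assoc (CFC.sqrt R),
    CFC.sqrt_mul_sqrt_self R hR.nonneg, Matrix.mul_assoc]

variable [Fintype n]

theorem posSemidef_inv_sub_of_posSemidef_sub_mul_mul {𝕜 : Type*} [RCLike 𝕜] [DecidableEq n]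
    {P Q X : Matrix n n 𝕜} (hP : P.PosSemidef) (hQ : Q.PosDef)
    (h : (P - P * Q * P - X).PosSemidef) : (Q⁻¹ - X).PosSemidef := by
  have hQdet : IsUnit Q.det := (isUnit_iff_isUnit_det Q).mp hQ.isUnit
  have hsq : (P - Q⁻¹)ᴴ * Q * (P - Q⁻¹) = Q⁻¹ - 2 • P + P * Q * P := by
    rw [(hP.1.sub hQ.inv.1).eq]
    noncomm_ring [Q.mul_nonsing_inv hQdet, Q.nonsing_inv_mul hQdet]
  convert ((hQ.posSemidef.conjTranspose_mul_mul_same (P - Q⁻¹)).add hP).add h using 1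
  rw [hsq]
  abel

theorem norm_toLp_mulVec_sq (B : Matrix m n ℝ) (x : n → ℝ) :
    ‖toLp 2 (B *ᵥ x)‖ ^ 2 = x ⬝ᵥ (Bᵀ * B) *ᵥ x := by
  rw [← real_inner_self_eq_norm_sq, EuclideanSpace.inner_eq_star_dotProduct, ofLp_toLp,
    star_trivial, ← mulVec_mulVec, dotProduct_mulVec x, vecMul_transpose, dotProduct_comm]

theorem dotProduct_mulVec_le_l2_opNorm_mul_norm_sq [DecidableEq n] (C : Matrix n n ℝ)
    (x : n → ℝ) : x ⬝ᵥ C *ᵥ x ≤ ‖C‖ * ‖toLp 2 x‖ ^ 2 :=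
  calc x ⬝ᵥ C *ᵥ x = ⟪toLp 2 x, toEuclideanCLM (𝕜 := ℝ) C (toLp 2 x)⟫ :=
        (inner_toEuclideanCLM C _ _).symm
    _ ≤ ‖toLp 2 x‖ * ‖toEuclideanCLM (𝕜 := ℝ) C (toLp 2 x)‖ := real_inner_le_norm _ _
    _ ≤ ‖toLp 2 x‖ * (‖C‖ * ‖toLp 2 x‖) := by
        gcongr
        exact (toEuclideanCLM (𝕜 := ℝ) C).le_opNorm _
    _ = ‖C‖ * ‖toLp 2 x‖ ^ 2 := by ring

theorem l2_opNorm_le_sqrt_of_posSemidef_sub_transpose_mul_self [DecidableEq n]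
    {B : Matrix m n ℝ} {C : Matrix n n ℝ} (h : (C - Bᵀ * B).PosSemidef) : ‖B‖ ≤ √‖C‖ := by
  rw [l2_opNorm_def]
  refine ContinuousLinearMap.opNorm_le_bound _ (Real.sqrt_nonneg _) fun x => ?_
  have hx : ‖toLp 2 (B *ᵥ ofLp x)‖ ^ 2 ≤ ‖C‖ * ‖x‖ ^ 2 := by
    have hquad := h.dotProduct_mulVec_nonneg (ofLp x)
    rw [star_trivial, sub_mulVec, dotProduct_sub, sub_nonneg] at hquad
    rw [norm_toLp_mulVec_sq]
    exact hquad.trans (dotProduct_mulVec_le_l2_opNorm_mul_norm_sq C (ofLp x))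
  calc _ = ‖toLp 2 (B *ᵥ ofLp x)‖ := rfl
    _ ≤ √(‖C‖ * ‖x‖ ^ 2) := Real.le_sqrt_of_sq_le hx
    _ = √‖C‖ * ‖x‖ := by rw [Real.sqrt_mul (norm_nonneg _), Real.sqrt_sq (norm_nonneg _)]

end Matrix

/-- If `P ⪰ 0`, `Q ≻ 0`, `R ≻ 0`, and `P ⪰ P·Q·P + Fᵀ·R·F`, then
`‖F‖ ≤ ‖R^{-1/2}‖ · √‖Q⁻¹‖` in the induced operator 2-norm. -/
theorem gain_norm_bound {n m : ℕ}
    (P Q : Matrix (Fin n) (Fin n) ℝ) (R : Matrix (Fin m) (Fin m) ℝ)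
    (F : Matrix (Fin m) (Fin n) ℝ)
    (hP : P.PosSemidef) (hQ : Q.PosDef) (hR : R.PosDef)
    (h : (P - P * Q * P - Fᵀ * R * F).PosSemidef) :
    ‖F‖ ≤ ‖(PosSemidef.sqrt hR.posSemidef)⁻¹‖ * Real.sqrt ‖Q⁻¹‖ := by
  rw [PosSemidef.sqrt_eq_cfcSqrt]
  have hSdet : IsUnit (CFC.sqrt R).det := (isUnit_iff_isUnit_det _).mp <|
    CFC.isUnit_sqrt_iff_isStrictlyPositive.mpr hR.isStrictlyPositive
  have hSF : ‖CFC.sqrt R * F‖ ≤ √‖Q⁻¹‖ := by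
    apply l2_opNorm_le_sqrt_of_posSemidef_sub_transpose_mul_self
    rw [transpose_mul_self_cfcSqrt_mul hR.posSemidef]
    exact posSemidef_inv_sub_of_posSemidef_sub_mul_mul hP hQ h
  calc ‖F‖ = ‖(CFC.sqrt R)⁻¹ * (CFC.sqrt R * F)‖ := by
        rw [nonsing_inv_mul_cancel_left _ _ hSdet]
    _ ≤ ‖(CFC.sqrt R)⁻¹‖ * ‖CFC.sqrt R * F‖ := l2_opNorm_mul _ _
    _ ≤ ‖(CFC.sqrt R)⁻¹‖ * √‖Q⁻¹‖ := by gcongr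
end

section
/- Quadratic cost bound for stable closed loop: under the hypotheses ‖Ā^j‖ ≤ c·ρ^j (c>0, 0<ρ<1), x_{i+1} = Ā·x_i + G·w_i, Σ_j ‖w_j‖² ≤ α, and Q̄ ⪰ 0 symmetric, the total cost satisfies Σ_{i=0}^{∞} x_i'·Q̄·x_i ≤ (2‖Q̄‖c²/(1−ρ²))·‖x_0‖² + (2c²‖G‖²‖Q̄‖/(1−ρ)²)·α. -/
/-!
Solving the recursion gives `x i = Āⁱ x₀ + ∑_{j<i} Ā^{i-1-j} G w_j`,
so `‖x i‖ ≤ c (ρⁱ ‖x₀‖ + ∑_{j<i} ρ^{i-1-j} ‖G w_j‖)`. Squaring with `(a + b)² ≤ 2a² + 2b²`, the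
homogeneous part sums to a geometric series in `ρ²`, and the forced part is the convolution of
`‖G w_j‖` with the kernel `ρᵏ` of `ℓ¹`-norm at most `1/(1-ρ)`, whose `ℓ²`-norm Young's
inequality bounds by `‖G‖ √α / (1-ρ)`. Finally `x' Q̄ x ≤ ‖Q̄‖ ‖x‖²`.
-/

open Finset Matrix
open scoped Matrix.Norms.L2Operator

theorem Module.End.eq_pow_apply_add_sum_pow_apply {R E : Type*} [Semiring R] [AddCommMonoid E]
    [Module R E] {A : Module.End R E} {x u : ℕ → E} (hx : ∀ i, x (i + 1) = A (x i) + u i)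
    (i : ℕ) : x i = (A ^ i) (x 0) + ∑ j ∈ range i, (A ^ (i - 1 - j)) (u j) := by
  induction i with
  | zero => simp
  | succ i ih =>
    have hshift : ∀ j ∈ range i, A ((A ^ (i - 1 - j)) (u j)) = (A ^ (i + 1 - 1 - j)) (u j) := by
      intro j hj
      rw [← Module.End.mul_apply, ← pow_succ', show i - 1 - j + 1 = i + 1 - 1 - j by
        have := mem_range.mp hj; omega]
    rw [hx, ih, map_add, map_sum, sum_congr rfl hshift, pow_succ', Module.End.mul_apply,
      sum_range_succ, Nat.add_sub_cancel, Nat.sub_self, pow_zero, Module.End.one_apply, add_assoc]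

theorem sum_sq_convolution_le {k b : ℕ → ℝ} {K : ℝ} (hk : ∀ m, 0 ≤ k m)
    (hK : ∀ M, ∑ m ∈ range M, k m ≤ K) (N : ℕ) :
    ∑ i ∈ range N, (∑ j ∈ range i, k (i - 1 - j) * b j) ^ 2 ≤
      K ^ 2 * ∑ j ∈ range N, b j ^ 2 := by
  have hK0 : 0 ≤ K := by simpa using hK 0
  have hrow : ∀ i, (∑ j ∈ range i, k (i - 1 - j) * b j) ^ 2 ≤
      K * ∑ j ∈ range i, k (i - 1 - j) * b j ^ 2 := by
    intro i
    calc (∑ j ∈ range i, k (i - 1 - j) * b j) ^ 2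
        ≤ (∑ j ∈ range i, k (i - 1 - j)) * ∑ j ∈ range i, k (i - 1 - j) * b j ^ 2 :=
          sum_sq_le_sum_mul_sum_of_sq_le_mul _ (fun j _ => hk _)
            (fun j _ => mul_nonneg (hk _) (sq_nonneg _)) (fun j _ => le_of_eq (by ring))
      _ ≤ K * ∑ j ∈ range i, k (i - 1 - j) * b j ^ 2 := by
          gcongr
          · exact sum_nonneg fun j _ => mul_nonneg (hk _) (sq_nonneg _)
          · rw [sum_range_reflect k i]; exact hK i
  have hcol : ∀ j, ∑ i ∈ Ico (j + 1) N, k (i - 1 - j) * b j ^ 2 ≤ K * b j ^ 2 := by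
    intro j
    rw [← sum_mul, sum_Ico_eq_sum_range,
      sum_congr rfl fun m _ => congrArg k (by omega : j + 1 + m - 1 - j = m)]
    exact mul_le_mul_of_nonneg_right (hK _) (sq_nonneg _)
  calc ∑ i ∈ range N, (∑ j ∈ range i, k (i - 1 - j) * b j) ^ 2
      ≤ K * ∑ i ∈ range N, ∑ j ∈ range i, k (i - 1 - j) * b j ^ 2 := by
        rw [mul_sum]; exact sum_le_sum fun i _ => hrow i
    _ = K * ∑ j ∈ range N, ∑ i ∈ Ico (j + 1) N, k (i - 1 - j) * b j ^ 2 := by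
        simp only [range_eq_Ico, sum_Ico_Ico_comm']
    _ ≤ K * ∑ j ∈ range N, K * b j ^ 2 :=
        mul_le_mul_of_nonneg_left (sum_le_sum fun j _ => hcol j) hK0
    _ = K ^ 2 * ∑ j ∈ range N, b j ^ 2 := by rw [← mul_sum]; ring

section StableRecursion

variable {𝕜 E : Type*} [NontriviallyNormedField 𝕜] [NormedAddCommGroup E] [NormedSpace 𝕜 E]
  {A : E →L[𝕜] E} {x u : ℕ → E} {c ρ : ℝ}

theorem norm_le_of_norm_pow_le (hx : ∀ i, x (i + 1) = A (x i) + u i)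
    (hA : ∀ k, ‖A ^ k‖ ≤ c * ρ ^ k) (i : ℕ) :
    ‖x i‖ ≤ c * (ρ ^ i * ‖x 0‖ + ∑ j ∈ range i, ρ ^ (i - 1 - j) * ‖u j‖) := by
  have hpow : ∀ k v, ‖(A ^ k) v‖ ≤ c * (ρ ^ k * ‖v‖) := fun k v => by
    rw [← mul_assoc]
    exact (A ^ k).le_opNorm v |>.trans (mul_le_mul_of_nonneg_right (hA k) (norm_nonneg v))
  have hsol := Module.End.eq_pow_apply_add_sum_pow_apply (A := (A : E →ₗ[𝕜] E)) hx i
  simp only [← ContinuousLinearMap.toLinearMap_pow, ContinuousLinearMap.coe_coe] at hsol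
  calc ‖x i‖ ≤ ‖(A ^ i) (x 0)‖ + ∑ j ∈ range i, ‖(A ^ (i - 1 - j)) (u j)‖ := by
        rw [hsol]; exact (norm_add_le _ _).trans (add_le_add le_rfl (norm_sum_le _ _))
    _ ≤ c * (ρ ^ i * ‖x 0‖) + ∑ j ∈ range i, c * (ρ ^ (i - 1 - j) * ‖u j‖) :=
        add_le_add (hpow _ _) (sum_le_sum fun j _ => hpow _ _)
    _ = _ := by rw [← mul_sum, mul_add]

theorem sum_sq_norm_le_of_norm_pow_le (hρ0 : 0 ≤ ρ) (hρ1 : ρ < 1)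
    (hx : ∀ i, x (i + 1) = A (x i) + u i) (hA : ∀ k, ‖A ^ k‖ ≤ c * ρ ^ k) (N : ℕ) :
    ∑ i ∈ range N, ‖x i‖ ^ 2 ≤
      2 * c ^ 2 / (1 - ρ ^ 2) * ‖x 0‖ ^ 2 +
        2 * c ^ 2 / (1 - ρ) ^ 2 * ∑ j ∈ range N, ‖u j‖ ^ 2 := by
  set forced : ℕ → ℝ := fun i => ∑ j ∈ range i, ρ ^ (i - 1 - j) * ‖u j‖
  have hsq : ∀ i, ‖x i‖ ^ 2 ≤
      2 * c ^ 2 * ‖x 0‖ ^ 2 * (ρ ^ 2) ^ i + 2 * c ^ 2 * forced i ^ 2 := fun i =>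
    calc ‖x i‖ ^ 2 ≤ (c * (ρ ^ i * ‖x 0‖ + forced i)) ^ 2 :=
          pow_le_pow_left₀ (norm_nonneg _) (norm_le_of_norm_pow_le hx hA i) 2
      _ ≤ c ^ 2 * (2 * ((ρ ^ i * ‖x 0‖) ^ 2 + forced i ^ 2)) := by
          rw [mul_pow]; exact mul_le_mul_of_nonneg_left add_sq_le (sq_nonneg c)
      _ = _ := by ring
  have hgeom : ∀ {r : ℝ}, 0 ≤ r → r < 1 → ∀ M, ∑ m ∈ range M, r ^ m ≤ 1 / (1 - r) :=
    fun hr0 hr1 M => by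
      simpa only [← range_eq_Ico, pow_zero] using
        geom_sum_Ico_le_of_lt_one hr0 hr1 (m := 0) (n := M)
  have hρsq : ρ ^ 2 < 1 := pow_lt_one₀ hρ0 hρ1 two_ne_zero
  have hforced : ∑ i ∈ range N, forced i ^ 2 ≤ (1 / (1 - ρ)) ^ 2 * ∑ j ∈ range N, ‖u j‖ ^ 2 :=
    sum_sq_convolution_le (fun m => pow_nonneg hρ0 m) (hgeom hρ0 hρ1) N
  calc ∑ i ∈ range N, ‖x i‖ ^ 2
      ≤ 2 * c ^ 2 * ‖x 0‖ ^ 2 * ∑ i ∈ range N, (ρ ^ 2) ^ i +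
          2 * c ^ 2 * ∑ i ∈ range N, forced i ^ 2 := by
        rw [mul_sum, mul_sum, ← sum_add_distrib]; exact sum_le_sum fun i _ => hsq i
    _ ≤ 2 * c ^ 2 * ‖x 0‖ ^ 2 * (1 / (1 - ρ ^ 2)) +
          2 * c ^ 2 * ((1 / (1 - ρ)) ^ 2 * ∑ j ∈ range N, ‖u j‖ ^ 2) := by
        gcongr
        · exact hgeom (sq_nonneg ρ) hρsq N
    _ = _ := by rw [_root_.one_div_pow]; ring

end StableRecursion

theorem Matrix.dotProduct_mulVec_le_l2_opNorm_mul_sq {m : Type*} [Fintype m] [DecidableEq m]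
    (Q : Matrix m m ℝ) (v : EuclideanSpace ℝ m) : (v : m → ℝ) ⬝ᵥ Q *ᵥ v ≤ ‖Q‖ * ‖v‖ ^ 2 := by
  rw [← inner_toEuclideanCLM]
  calc inner ℝ v (toEuclideanCLM (𝕜 := ℝ) Q v) ≤ ‖v‖ * ‖toEuclideanCLM (𝕜 := ℝ) Q v‖ :=
        real_inner_le_norm _ _
    _ ≤ ‖v‖ * (‖Q‖ * ‖v‖) :=
        mul_le_mul_of_nonneg_left ((toEuclideanCLM (𝕜 := ℝ) Q).le_opNorm v) (norm_nonneg v)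
    _ = ‖Q‖ * ‖v‖ ^ 2 := by ring

theorem closed_loop_cost_bound_general {n q : ℕ}
    (Abar Qbar : Matrix (Fin n) (Fin n) ℝ) (G : Matrix (Fin n) (Fin q) ℝ)
    (c ρ α : ℝ) (hρ0 : 0 < ρ) (hρ1 : ρ < 1)
    (hpow : ∀ j : ℕ, ‖Abar ^ j‖ ≤ c * ρ ^ j)
    (x : ℕ → EuclideanSpace ℝ (Fin n)) (w : ℕ → EuclideanSpace ℝ (Fin q))
    (hrec : ∀ i, x (i + 1) =
      (EuclideanSpace.equiv (Fin n) ℝ).symm (Abar *ᵥ x i + G *ᵥ w i))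
    (hw : ∀ N, ∑ j ∈ Finset.range N, ‖w j‖ ^ 2 ≤ α) :
    ∀ N, ∑ i ∈ Finset.range N, (x i : Fin n → ℝ) ⬝ᵥ Qbar *ᵥ (x i) ≤
      2 * ‖Qbar‖ * c ^ 2 / (1 - ρ ^ 2) * ‖x 0‖ ^ 2 +
        2 * c ^ 2 * ‖G‖ ^ 2 * ‖Qbar‖ / (1 - ρ) ^ 2 * α := by
  intro N
  set u : ℕ → EuclideanSpace ℝ (Fin n) :=
    fun j => (EuclideanSpace.equiv (Fin n) ℝ).symm (G *ᵥ w j)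
  have hx : ∀ i, x (i + 1) = toEuclideanCLM (𝕜 := ℝ) Abar (x i) + u i := fun i => by
    rw [hrec]; rfl
  have hA : ∀ k, ‖toEuclideanCLM (𝕜 := ℝ) Abar ^ k‖ ≤ c * ρ ^ k := fun k => by
    rw [← map_pow]; exact hpow k
  have hu : ∑ j ∈ range N, ‖u j‖ ^ 2 ≤ ‖G‖ ^ 2 * α :=
    calc ∑ j ∈ range N, ‖u j‖ ^ 2 ≤ ∑ j ∈ range N, ‖G‖ ^ 2 * ‖w j‖ ^ 2 :=
          sum_le_sum fun j _ => by
            rw [← mul_pow]; exact pow_le_pow_left₀ (norm_nonneg _) (G.l2_opNorm_mulVec _) 2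
      _ ≤ ‖G‖ ^ 2 * α := by
          rw [← mul_sum]; exact mul_le_mul_of_nonneg_left (hw N) (sq_nonneg _)
  calc ∑ i ∈ range N, (x i : Fin n → ℝ) ⬝ᵥ Qbar *ᵥ (x i)
      ≤ ‖Qbar‖ * ∑ i ∈ range N, ‖x i‖ ^ 2 := by
        rw [mul_sum]
        exact sum_le_sum fun i _ => Qbar.dotProduct_mulVec_le_l2_opNorm_mul_sq (x i)
    _ ≤ ‖Qbar‖ * (2 * c ^ 2 / (1 - ρ ^ 2) * ‖x 0‖ ^ 2 +
          2 * c ^ 2 / (1 - ρ) ^ 2 * (‖G‖ ^ 2 * α)) := by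
        gcongr
        exact (sum_sq_norm_le_of_norm_pow_le hρ0.le hρ1 hx hA N).trans (by gcongr)
    _ = _ := by ring

/-- Quadratic cost bound for a stable closed loop: if `‖Ā^j‖ ≤ c ρ^j`,
`x_{i+1} = Ā x_i + G w_i`, `Σ_j ‖w_j‖² ≤ α`, and `Q̄ ⪰ 0` symmetric, then
`Σ_i x_i' Q̄ x_i ≤ (2‖Q̄‖c²/(1−ρ²))‖x_0‖² + (2c²‖G‖²‖Q̄‖/(1−ρ)²) α`. -/
theorem closed_loop_cost_bound {n q : ℕ}
    (Abar Qbar : Matrix (Fin n) (Fin n) ℝ) (G : Matrix (Fin n) (Fin q) ℝ)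
    (c ρ α : ℝ) (hc : 0 < c) (hρ0 : 0 < ρ) (hρ1 : ρ < 1) (hα : 0 < α)
    (hQ : Qbar.PosSemidef)
    (hpow : ∀ j : ℕ, ‖Abar ^ j‖ ≤ c * ρ ^ j)
    (x : ℕ → EuclideanSpace ℝ (Fin n)) (w : ℕ → EuclideanSpace ℝ (Fin q))
    (hrec : ∀ i, x (i + 1) =
      (EuclideanSpace.equiv (Fin n) ℝ).symm (Abar *ᵥ x i + G *ᵥ w i))
    (hw : ∀ N, ∑ j ∈ Finset.range N, ‖w j‖ ^ 2 ≤ α) :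
    ∀ N, ∑ i ∈ Finset.range N, (x i : Fin n → ℝ) ⬝ᵥ Qbar *ᵥ (x i) ≤
      2 * ‖Qbar‖ * c ^ 2 / (1 - ρ ^ 2) * ‖x 0‖ ^ 2 +
        2 * c ^ 2 * ‖G‖ ^ 2 * ‖Qbar‖ / (1 - ρ) ^ 2 * α :=
  closed_loop_cost_bound_general Abar Qbar G c ρ α hρ0 hρ1 hpow x w hrec hw
end
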